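/- arXiv:1412.3263 — 5 statements merged into one kernel-verified Lean document; each statement's English description precedes it below -/
import Mathlib

section
/- Let x_1 ≥ x_2 ≥ ... ≥ x_n > 0 and y_1 ≥ y_2 ≥ ... ≥ y_n > 0 be real numbers such that ∏_{i≤k} x_i ≥ ∏_{i≤k} y_i for all 1 ≤ k ≤ n. Then ∑_{i=1}^n x_i ≥ ∑_{i=1}^n y_i. -/
/-!
Put `c i = log (x i) - log (y i)`. The product hypothesis says exactly that the partial sums of `c`
are nonnegative, so by Abel summation against the decreasing nonnegative weights `y i` we get
`0 ≤ ∑ y i * c i`. Termwise, `y i * log (x i / y i) ≤ x i - y i` since `log t ≤ t - 1`; summing gives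
`0 ≤ ∑ (x i - y i)`.
-/

open Finset

section AbelSummation

variable {R : Type*} [CommRing R] [LinearOrder R] [IsOrderedRing R]

theorem mul_sum_Icc_le_sum_Icc_mul {n : ℕ} {y c : ℕ → R} (hy : AntitoneOn y (Icc 1 n))
    (hc : ∀ k ≤ n, 0 ≤ ∑ i ∈ Icc 1 k, c i) :
    y n * ∑ i ∈ Icc 1 n, c i ≤ ∑ i ∈ Icc 1 n, y i * c i := by
  induction n with
  | zero => simp
  | succ n ih =>
    have ih := ih (hy.mono (Icc_subset_Icc_right n.le_succ)) fun k hk => hc k (by omega)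
    have hy_step : y (n + 1) * ∑ i ∈ Icc 1 n, c i ≤ y n * ∑ i ∈ Icc 1 n, c i := by
      rcases Nat.eq_zero_or_pos n with rfl | hn
      · simp
      · exact mul_le_mul_of_nonneg_right
          (hy (mem_Icc.2 ⟨hn, n.le_succ⟩) (mem_Icc.2 ⟨by omega, le_rfl⟩) n.le_succ)
          (hc n n.le_succ)
    rw [sum_Icc_succ_top (by omega), sum_Icc_succ_top (by omega), mul_add]
    exact add_le_add_left (hy_step.trans ih) _

theorem sum_Icc_mul_nonneg {n : ℕ} {y c : ℕ → R} (hy : AntitoneOn y (Icc 1 n))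
    (hy_nonneg : ∀ i ∈ Icc 1 n, 0 ≤ y i) (hc : ∀ k ≤ n, 0 ≤ ∑ i ∈ Icc 1 k, c i) :
    0 ≤ ∑ i ∈ Icc 1 n, y i * c i := by
  rcases Nat.eq_zero_or_pos n with rfl | hn
  · simp
  · exact (mul_nonneg (hy_nonneg n (by simp; omega)) (hc n le_rfl)).trans
      (mul_sum_Icc_le_sum_Icc_mul hy hc)

end AbelSummation

theorem Real.mul_sub_log_le_sub {a b : ℝ} (ha : 0 < a) (hb : 0 < b) :
    b * (Real.log a - Real.log b) ≤ a - b := by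
  have h := mul_le_mul_of_nonneg_left (Real.log_le_sub_one_of_pos (div_pos ha hb)) hb.le
  rwa [Real.log_div ha.ne' hb.ne', mul_sub_one, mul_div_cancel₀ a hb.ne'] at h

theorem Real.sum_log_sub_log_nonneg_of_prod_le_prod {ι : Type*} {s : Finset ι} {a b : ι → ℝ}
    (ha : ∀ i ∈ s, 0 < a i) (hb : ∀ i ∈ s, 0 < b i) (h : ∏ i ∈ s, b i ≤ ∏ i ∈ s, a i) :
    0 ≤ ∑ i ∈ s, (Real.log (a i) - Real.log (b i)) := by
  have h := Real.log_le_log (prod_pos hb) h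
  rw [Real.log_prod fun i hi => (ha i hi).ne', Real.log_prod fun i hi => (hb i hi).ne'] at h
  rw [sum_sub_distrib]
  linarith

theorem stmt2_general (n : ℕ) (x y : ℕ → ℝ)
    (hxpos : ∀ i, 1 ≤ i → i ≤ n → 0 < x i)
    (hypos : ∀ i, 1 ≤ i → i ≤ n → 0 < y i)
    (hymono : ∀ i j, 1 ≤ i → i ≤ j → j ≤ n → y j ≤ y i)
    (hprod : ∀ k, 1 ≤ k → k ≤ n →
      ∏ i ∈ Finset.Icc 1 k, y i ≤ ∏ i ∈ Finset.Icc 1 k, x i) :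
    ∑ i ∈ Finset.Icc 1 n, y i ≤ ∑ i ∈ Finset.Icc 1 n, x i := by
  have hx : ∀ i ∈ Icc 1 n, 0 < x i := fun i hi => hxpos i (mem_Icc.1 hi).1 (mem_Icc.1 hi).2
  have hy : ∀ i ∈ Icc 1 n, 0 < y i := fun i hi => hypos i (mem_Icc.1 hi).1 (mem_Icc.1 hi).2
  have hy_anti : AntitoneOn y (Icc 1 n) := fun i hi j hj hij =>
    hymono i j (mem_Icc.1 hi).1 hij (mem_Icc.1 hj).2
  have hpartial : ∀ k ≤ n, 0 ≤ ∑ i ∈ Icc 1 k, (Real.log (x i) - Real.log (y i)) := by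
    intro k hk
    rcases Nat.eq_zero_or_pos k with rfl | hk1
    · simp
    have hsub : Icc 1 k ⊆ Icc 1 n := Icc_subset_Icc_right hk
    exact Real.sum_log_sub_log_nonneg_of_prod_le_prod (fun i hi => hx i (hsub hi))
      (fun i hi => hy i (hsub hi)) (hprod k hk1 hk)
  have habel := sum_Icc_mul_nonneg hy_anti (fun i hi => (hy i hi).le) hpartial
  have hterm : ∑ i ∈ Icc 1 n, y i * (Real.log (x i) - Real.log (y i)) ≤
      ∑ i ∈ Icc 1 n, (x i - y i) :=
    sum_le_sum fun i hi => Real.mul_sub_log_le_sub (hx i hi) (hy i hi)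
  rw [sum_sub_distrib] at hterm
  linarith

theorem stmt2 (n : ℕ) (x y : ℕ → ℝ)
    (hxpos : ∀ i, 1 ≤ i → i ≤ n → 0 < x i)
    (hypos : ∀ i, 1 ≤ i → i ≤ n → 0 < y i)
    (hxmono : ∀ i j, 1 ≤ i → i ≤ j → j ≤ n → x j ≤ x i)
    (hymono : ∀ i j, 1 ≤ i → i ≤ j → j ≤ n → y j ≤ y i)
    (hprod : ∀ k, 1 ≤ k → k ≤ n →
      ∏ i ∈ Finset.Icc 1 k, y i ≤ ∏ i ∈ Finset.Icc 1 k, x i) :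
    ∑ i ∈ Finset.Icc 1 n, y i ≤ ∑ i ∈ Finset.Icc 1 n, x i :=
  stmt2_general n x y hxpos hypos hymono hprod
end

section
/- Let x_1 ≥ x_2 ≥ ... ≥ x_n > 0 and y_1 ≥ y_2 ≥ ... ≥ y_n > 0 be real numbers such that ∏_{i≤k} x_i ≥ ∏_{i≤k} y_i for all 1 ≤ k ≤ n. If ∑_{i=1}^n x_i = ∑_{i=1}^n y_i, then x_i = y_i for all i. -/
/-!
Put `ℓ i = log (x i / y i)`. The product hypothesis says that every partial sum of `ℓ` is
nonnegative, so Abel summation against the decreasing positive weights `y i` gives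
`0 ≤ ∑ y i * ℓ i`. On the other hand `y * log (x / y) ≤ x - y`, with equality only when `x = y`,
and the right-hand sides add up to `0`. Hence every one of these inequalities is an equality.
-/

open Finset

section Abel

variable {R : Type*} [CommRing R] [LinearOrder R] [IsStrictOrderedRing R]

theorem mul_sum_Icc_le_sum_Icc_mul_of_antitoneOn {n : ℕ} {w a : ℕ → R}
    (hw : AntitoneOn w (Set.Icc 1 n)) (ha : ∀ k, 1 ≤ k → k ≤ n → 0 ≤ ∑ i ∈ Icc 1 k, a i)
    {k : ℕ} (hk : 1 ≤ k) (hkn : k ≤ n) :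
    w k * ∑ i ∈ Icc 1 k, a i ≤ ∑ i ∈ Icc 1 k, w i * a i := by
  induction k, hk using Nat.le_induction with
  | base => simp
  | succ k hk ih =>
    rw [sum_Icc_succ_top (by omega), sum_Icc_succ_top (by omega), mul_add]
    have hwk : w (k + 1) ≤ w k := hw ⟨hk, by omega⟩ ⟨by omega, hkn⟩ k.le_succ
    have := mul_le_mul_of_nonneg_right hwk (ha k hk (by omega))
    linarith [ih (by omega)]

theorem sum_Icc_mul_nonneg_of_antitoneOn {n : ℕ} {w a : ℕ → R}
    (hw : AntitoneOn w (Set.Icc 1 n)) (hwn : 0 ≤ w n)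
    (ha : ∀ k, 1 ≤ k → k ≤ n → 0 ≤ ∑ i ∈ Icc 1 k, a i) :
    0 ≤ ∑ i ∈ Icc 1 n, w i * a i := by
  rcases Nat.eq_zero_or_pos n with rfl | hn
  · simp
  · exact (mul_nonneg hwn (ha n hn le_rfl)).trans
      (mul_sum_Icc_le_sum_Icc_mul_of_antitoneOn hw ha hn le_rfl)

end Abel

namespace Real

theorem mul_log_div_le_sub {x y : ℝ} (hx : 0 < x) (hy : 0 < y) : y * log (x / y) ≤ x - y := by
  calc y * log (x / y) ≤ y * (x / y - 1) :=
        mul_le_mul_of_nonneg_left (log_le_sub_one_of_pos (div_pos hx hy)) hy.le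
    _ = x - y := by field_simp

theorem mul_log_div_lt_sub {x y : ℝ} (hx : 0 < x) (hy : 0 < y) (hxy : x ≠ y) :
    y * log (x / y) < x - y := by
  have hne : x / y ≠ 1 := by rwa [Ne, div_eq_one_iff_eq hy.ne']
  calc y * log (x / y) < y * (x / y - 1) :=
        mul_lt_mul_of_pos_left (log_lt_sub_one_of_pos (div_pos hx hy) hne) hy
    _ = x - y := by field_simp

theorem sum_log_div_nonneg_of_prod_le {ι : Type*} {s : Finset ι} {x y : ι → ℝ}
    (hx : ∀ i ∈ s, 0 < x i) (hy : ∀ i ∈ s, 0 < y i) (h : ∏ i ∈ s, y i ≤ ∏ i ∈ s, x i) :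
    0 ≤ ∑ i ∈ s, log (x i / y i) := by
  rw [← log_prod fun i hi => (div_pos (hx i hi) (hy i hi)).ne', prod_div_distrib]
  exact log_nonneg ((one_le_div (prod_pos hy)).mpr h)

end Real

theorem stmt3_general (n : ℕ) (x y : ℕ → ℝ)
    (hxpos : ∀ i, 1 ≤ i → i ≤ n → 0 < x i)
    (hypos : ∀ i, 1 ≤ i → i ≤ n → 0 < y i)
    (hymono : ∀ i j, 1 ≤ i → i ≤ j → j ≤ n → y j ≤ y i)
    (hprod : ∀ k, 1 ≤ k → k ≤ n →
      ∏ i ∈ Finset.Icc 1 k, y i ≤ ∏ i ∈ Finset.Icc 1 k, x i)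
    (hsum : ∑ i ∈ Finset.Icc 1 n, x i = ∑ i ∈ Finset.Icc 1 n, y i) :
    ∀ i, 1 ≤ i → i ≤ n → x i = y i := by
  intro i hi hin
  have hx : ∀ j ∈ Icc 1 n, 0 < x j := fun j hj => hxpos j (mem_Icc.1 hj).1 (mem_Icc.1 hj).2
  have hy : ∀ j ∈ Icc 1 n, 0 < y j := fun j hj => hypos j (mem_Icc.1 hj).1 (mem_Icc.1 hj).2
  have hlog_partial : ∀ k, 1 ≤ k → k ≤ n → 0 ≤ ∑ j ∈ Icc 1 k, Real.log (x j / y j) :=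
    fun k hk hkn => Real.sum_log_div_nonneg_of_prod_le
      (fun j hj => hx j (Icc_subset_Icc_right hkn hj))
      (fun j hj => hy j (Icc_subset_Icc_right hkn hj)) (hprod k hk hkn)
  have hweighted : 0 ≤ ∑ j ∈ Icc 1 n, y j * Real.log (x j / y j) :=
    sum_Icc_mul_nonneg_of_antitoneOn
      (fun j hj k hk hjk => hymono j k hj.1 hjk hk.2) (hypos n (by omega) le_rfl).le hlog_partial
  have hle : ∀ j ∈ Icc 1 n, y j * Real.log (x j / y j) ≤ x j - y j :=
    fun j hj => Real.mul_log_div_le_sub (hx j hj) (hy j hj)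
  have hsum_eq : ∑ j ∈ Icc 1 n, y j * Real.log (x j / y j) = ∑ j ∈ Icc 1 n, (x j - y j) := by
    refine le_antisymm (sum_le_sum hle) ?_
    rwa [sum_sub_distrib, hsum, sub_self]
  have hmem : i ∈ Icc 1 n := mem_Icc.2 ⟨hi, hin⟩
  by_contra hne
  exact (Real.mul_log_div_lt_sub (hx i hmem) (hy i hmem) hne).ne
    ((sum_eq_sum_iff_of_le hle).1 hsum_eq i hmem)

theorem stmt3 (n : ℕ) (x y : ℕ → ℝ)
    (hxpos : ∀ i, 1 ≤ i → i ≤ n → 0 < x i)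
    (hypos : ∀ i, 1 ≤ i → i ≤ n → 0 < y i)
    (hxmono : ∀ i j, 1 ≤ i → i ≤ j → j ≤ n → x j ≤ x i)
    (hymono : ∀ i j, 1 ≤ i → i ≤ j → j ≤ n → y j ≤ y i)
    (hprod : ∀ k, 1 ≤ k → k ≤ n →
      ∏ i ∈ Finset.Icc 1 k, y i ≤ ∏ i ∈ Finset.Icc 1 k, x i)
    (hsum : ∑ i ∈ Finset.Icc 1 n, x i = ∑ i ∈ Finset.Icc 1 n, y i) :
    ∀ i, 1 ≤ i → i ≤ n → x i = y i :=
  stmt3_general n x y hxpos hypos hymono hprod hsum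
end

section
/- Let x_1 ≥ x_2 ≥ ... ≥ x_n > 0 and y_1 ≥ y_2 ≥ ... ≥ y_n > 0 be real numbers such that ∑_{i≥k} x_i ≥ ∑_{i≥k} y_i for all 1 ≤ k ≤ n. Then ∏_{i=1}^n x_i ≥ ∏_{i=1}^n y_i. -/
/-!
By concavity of `log`, `log xᵢ - log yᵢ ≥ (xᵢ - yᵢ) / xᵢ`, so it suffices to show
`∑ (xᵢ - yᵢ) / xᵢ ≥ 0`. The weights `1 / xᵢ` increase with `i` while every tail sum of
`xᵢ - yᵢ` is nonnegative, and Abel summation makes the weighted sum nonnegative.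
-/

open Finset

section Abel

variable {R : Type*} [CommRing R] [PartialOrder R] [IsOrderedRing R]

theorem mul_sum_Icc_le_sum_Icc_mul_s4 {w d : ℕ → R} {m n : ℕ} (hw : MonotoneOn w (Icc m n))
    (hd : ∀ k ∈ Ioc m n, 0 ≤ ∑ i ∈ Icc k n, d i) :
    w m * ∑ i ∈ Icc m n, d i ≤ ∑ i ∈ Icc m n, w i * d i := by
  induction hl : n + 1 - m generalizing m with
  | zero => simp [Icc_eq_empty_of_lt (show n < m by omega)]
  | succ l ih =>
    have hmn : m ≤ n := by omega
    have htail := ih (m := m + 1) (hw.mono (Icc_subset_Icc_left (by omega)))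
      (fun k hk => hd k (Ioc_subset_Ioc_left (by omega) hk)) (by omega)
    have hstep : w m * ∑ i ∈ Icc (m + 1) n, d i ≤ w (m + 1) * ∑ i ∈ Icc (m + 1) n, d i := by
      rcases lt_or_ge m n with h | h
      · exact mul_le_mul_of_nonneg_right (hw (by simp; omega) (by simp; omega) (by omega))
          (hd (m + 1) (by simp; omega))
      · simp [Icc_eq_empty_of_lt (show n < m + 1 by omega)]
    rw [← add_sum_Ioc_eq_sum_Icc hmn, ← add_sum_Ioc_eq_sum_Icc hmn, ← Icc_add_one_left_eq_Ioc,
      mul_add]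
    exact add_le_add_right (hstep.trans htail) _

theorem sum_Icc_mul_nonneg_s4 {w d : ℕ → R} {m n : ℕ} (hw : MonotoneOn w (Icc m n)) (hwm : 0 ≤ w m)
    (hd : ∀ k ∈ Icc m n, 0 ≤ ∑ i ∈ Icc k n, d i) :
    0 ≤ ∑ i ∈ Icc m n, w i * d i := by
  rcases le_or_gt m n with hmn | hnm
  · exact (mul_nonneg hwm (hd m (by simp [hmn]))).trans
      (mul_sum_Icc_le_sum_Icc_mul_s4 hw fun k hk => hd k (Ioc_subset_Icc_self hk))
  · simp [Icc_eq_empty_of_lt hnm]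

end Abel

theorem Real.prod_le_prod_of_sum_sub_div_nonneg {ι : Type*} {s : Finset ι} {x y : ι → ℝ}
    (hx : ∀ i ∈ s, 0 < x i) (hy : ∀ i ∈ s, 0 < y i) (h : 0 ≤ ∑ i ∈ s, (x i - y i) / x i) :
    ∏ i ∈ s, y i ≤ ∏ i ∈ s, x i := by
  have hlog : ∀ i ∈ s, (x i - y i) / x i ≤ Real.log (x i) - Real.log (y i) := fun i hi => by
    have := Real.one_sub_inv_le_log_of_pos (div_pos (hx i hi) (hy i hi))
    rwa [inv_div, Real.log_div (hx i hi).ne' (hy i hi).ne', one_sub_div (hx i hi).ne'] at this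
  rw [← Real.log_le_log_iff (prod_pos hy) (prod_pos hx), Real.log_prod fun i hi => (hy i hi).ne',
    Real.log_prod fun i hi => (hx i hi).ne', ← sub_nonneg, ← sum_sub_distrib]
  exact h.trans (sum_le_sum hlog)

theorem stmt4_general (n : ℕ) (x y : ℕ → ℝ)
    (hxpos : ∀ i, 1 ≤ i → i ≤ n → 0 < x i)
    (hypos : ∀ i, 1 ≤ i → i ≤ n → 0 < y i)
    (hxmono : ∀ i j, 1 ≤ i → i ≤ j → j ≤ n → x j ≤ x i)
    (hsum : ∀ k, 1 ≤ k → k ≤ n →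
      ∑ i ∈ Finset.Icc k n, y i ≤ ∑ i ∈ Finset.Icc k n, x i) :
    ∏ i ∈ Finset.Icc 1 n, y i ≤ ∏ i ∈ Finset.Icc 1 n, x i := by
  have hxpos' : ∀ i ∈ Icc 1 n, 0 < x i := fun i hi => hxpos i (mem_Icc.1 hi).1 (mem_Icc.1 hi).2
  have hinv : MonotoneOn (fun i => (x i)⁻¹) (Icc 1 n) := fun i hi j hj hij =>
    inv_anti₀ (hxpos' j hj) (hxmono i j (mem_Icc.1 hi).1 hij (mem_Icc.1 hj).2)
  have htail : ∀ k ∈ Icc 1 n, 0 ≤ ∑ i ∈ Icc k n, (x i - y i) := fun k hk => by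
    rw [sum_sub_distrib, sub_nonneg]
    exact hsum k (mem_Icc.1 hk).1 (mem_Icc.1 hk).2
  refine Real.prod_le_prod_of_sum_sub_div_nonneg hxpos'
    (fun i hi => hypos i (mem_Icc.1 hi).1 (mem_Icc.1 hi).2) ?_
  simp only [div_eq_inv_mul]
  rcases Nat.eq_zero_or_pos n with rfl | hn
  · simp
  · exact sum_Icc_mul_nonneg_s4 hinv (inv_nonneg.2 (hxpos 1 le_rfl hn).le) htail

theorem stmt4 (n : ℕ) (x y : ℕ → ℝ)
    (hxpos : ∀ i, 1 ≤ i → i ≤ n → 0 < x i)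
    (hypos : ∀ i, 1 ≤ i → i ≤ n → 0 < y i)
    (hxmono : ∀ i j, 1 ≤ i → i ≤ j → j ≤ n → x j ≤ x i)
    (hymono : ∀ i j, 1 ≤ i → i ≤ j → j ≤ n → y j ≤ y i)
    (hsum : ∀ k, 1 ≤ k → k ≤ n →
      ∑ i ∈ Finset.Icc k n, y i ≤ ∑ i ∈ Finset.Icc k n, x i) :
    ∏ i ∈ Finset.Icc 1 n, y i ≤ ∏ i ∈ Finset.Icc 1 n, x i :=
  stmt4_general n x y hxpos hypos hxmono hsum
end

section
/- Let x_1 ≥ x_2 ≥ ... ≥ x_n > 0 and y_1 ≥ y_2 ≥ ... ≥ y_n > 0 be real numbers such that ∑_{i≥k} x_i ≥ ∑_{i≥k} y_i for all 1 ≤ k ≤ n. If ∏_{i=1}^n x_i = ∏_{i=1}^n y_i, then x_i = y_i for all i. -/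
/-! With `tᵢ = yᵢ / xᵢ`, the weights `1 / xᵢ` are nondecreasing, so Abel summation against the
nonpositive tail sums of `y - x` gives `∑ (tᵢ - 1) = ∑ (yᵢ - xᵢ) / xᵢ ≤ 0`. On the other hand
`∏ tᵢ = 1`, so `∑ log tᵢ = 0`; as `log t ≤ t - 1` with equality only at `t = 1`, every `tᵢ = 1`. -/

open Finset

section TailSums

variable {R : Type*} [CommRing R] [LinearOrder R] [IsStrictOrderedRing R] {c d : ℕ → R} {m n : ℕ}

theorem sum_Icc_mul_le_mul_sum_Icc_of_monotoneOn (hc : MonotoneOn c (Set.Icc m n))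
    (hd : ∀ k ∈ Icc m n, ∑ i ∈ Icc k n, d i ≤ 0) :
    ∑ i ∈ Icc m n, c i * d i ≤ c m * ∑ i ∈ Icc m n, d i := by
  rcases lt_or_ge n m with hnm | hmn
  · simp [Icc_eq_empty_of_lt hnm]
  suffices ∀ k (hkn : k ≤ n), m ≤ k →
      ∑ i ∈ Icc k n, c i * d i ≤ c k * ∑ i ∈ Icc k n, d i from this m hmn le_rfl
  refine fun j hjn ↦ Nat.decreasingInduction (fun k hk ih hmk ↦ ?_) (by simp) hjn
  have hk_mem : k ∈ Set.Icc m n := ⟨hmk, by omega⟩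
  have hk1_mem : k + 1 ∈ Set.Icc m n := ⟨by omega, hk⟩
  have hsplit : ∀ f : ℕ → R, ∑ i ∈ Icc k n, f i = f k + ∑ i ∈ Icc (k + 1) n, f i := fun f ↦ by
    rw [Icc_eq_cons_Ioc (by omega), sum_cons, Icc_add_one_left_eq_Ioc]
  calc ∑ i ∈ Icc k n, c i * d i
      = c k * d k + ∑ i ∈ Icc (k + 1) n, c i * d i := hsplit _
    _ ≤ c k * d k + c (k + 1) * ∑ i ∈ Icc (k + 1) n, d i := by gcongr; exact ih (by omega)
    _ ≤ c k * d k + c k * ∑ i ∈ Icc (k + 1) n, d i := by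
        have hT := hd (k + 1) (by simpa using hk1_mem)
        linarith [mul_le_mul_of_nonpos_right (hc hk_mem hk1_mem (by omega)) hT]
    _ = c k * ∑ i ∈ Icc k n, d i := by rw [hsplit d, mul_add]

theorem sum_Icc_mul_nonpos_of_monotoneOn (hc0 : 0 ≤ c m) (hc : MonotoneOn c (Set.Icc m n))
    (hd : ∀ k ∈ Icc m n, ∑ i ∈ Icc k n, d i ≤ 0) :
    ∑ i ∈ Icc m n, c i * d i ≤ 0 := by
  refine (sum_Icc_mul_le_mul_sum_Icc_of_monotoneOn hc hd).trans
    (mul_nonpos_of_nonneg_of_nonpos hc0 ?_)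
  rcases lt_or_ge n m with hnm | hmn
  · simp [Icc_eq_empty_of_lt hnm]
  · exact hd m (by simpa using hmn)

end TailSums

theorem sum_Icc_div_le_card_of_tail_sums_le {x y : ℕ → ℝ} {m n : ℕ}
    (hx : ∀ i ∈ Set.Icc m n, 0 < x i) (hanti : AntitoneOn x (Set.Icc m n))
    (hsum : ∀ k ∈ Icc m n, ∑ i ∈ Icc k n, y i ≤ ∑ i ∈ Icc k n, x i) :
    ∑ i ∈ Icc m n, y i / x i ≤ #(Icc m n) := by
  have hinv : MonotoneOn (fun i ↦ (x i)⁻¹) (Set.Icc m n) := fun i hi j hj hij ↦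
    inv_anti₀ (hx j hj) (hanti hi hj hij)
  have hratio : ∀ i ∈ Icc m n, y i / x i = 1 + (x i)⁻¹ * (y i - x i) := fun i hi ↦ by
    have hxi := (hx i (by simpa using hi)).ne'
    field_simp
    ring
  rw [sum_congr rfl hratio, sum_add_distrib, sum_const, nsmul_one]
  rcases lt_or_ge n m with hnm | hmn
  · simp [Icc_eq_empty_of_lt hnm]
  have hnonpos := sum_Icc_mul_nonpos_of_monotoneOn (c := fun i ↦ (x i)⁻¹)
    (d := fun i ↦ y i - x i) (inv_nonneg.mpr (hx m ⟨le_rfl, hmn⟩).le) hinv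
    fun k hk ↦ by simpa [sum_sub_distrib] using hsum k hk
  linarith

theorem Real.eq_one_of_prod_eq_one_of_sum_le_card {ι : Type*} {s : Finset ι} {t : ι → ℝ}
    (ht : ∀ i ∈ s, 0 < t i) (hprod : ∏ i ∈ s, t i = 1) (hsum : ∑ i ∈ s, t i ≤ #s) :
    ∀ i ∈ s, t i = 1 := by
  have hlog_le : ∀ i ∈ s, Real.log (t i) ≤ t i - 1 := fun i hi ↦
    Real.log_le_sub_one_of_pos (ht i hi)
  have hlog_sum : ∑ i ∈ s, Real.log (t i) = 0 := by
    rw [← Real.log_prod fun i hi ↦ (ht i hi).ne', hprod, Real.log_one]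
  have hsub_sum : ∑ i ∈ s, (t i - 1) ≤ 0 := by simpa [sum_sub_distrib] using hsum
  have hlog_eq := (sum_eq_sum_iff_of_le hlog_le).mp
    (le_antisymm (sum_le_sum hlog_le) (hlog_sum ▸ hsub_sum))
  intro i hi
  by_contra hne
  exact (Real.log_lt_sub_one_of_pos (ht i hi) hne).ne (hlog_eq i hi)

theorem stmt5_general (n : ℕ) (x y : ℕ → ℝ)
    (hxpos : ∀ i, 1 ≤ i → i ≤ n → 0 < x i)
    (hypos : ∀ i, 1 ≤ i → i ≤ n → 0 < y i)
    (hxmono : ∀ i j, 1 ≤ i → i ≤ j → j ≤ n → x j ≤ x i)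
    (hsum : ∀ k, 1 ≤ k → k ≤ n →
      ∑ i ∈ Finset.Icc k n, y i ≤ ∑ i ∈ Finset.Icc k n, x i)
    (hprod : ∏ i ∈ Finset.Icc 1 n, x i = ∏ i ∈ Finset.Icc 1 n, y i) :
    ∀ i, 1 ≤ i → i ≤ n → x i = y i := by
  have hratio_pos : ∀ i ∈ Icc 1 n, 0 < y i / x i := fun i hi ↦ by
    rw [mem_Icc] at hi
    exact div_pos (hypos i hi.1 hi.2) (hxpos i hi.1 hi.2)
  have hratio_prod : ∏ i ∈ Icc 1 n, y i / x i = 1 := by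
    have hy_prod : 0 < ∏ i ∈ Icc 1 n, y i := prod_pos fun i hi ↦ by
      rw [mem_Icc] at hi
      exact hypos i hi.1 hi.2
    rw [prod_div_distrib, hprod, div_self hy_prod.ne']
  have hratio_sum : ∑ i ∈ Icc 1 n, y i / x i ≤ #(Icc 1 n) :=
    sum_Icc_div_le_card_of_tail_sums_le (fun i hi ↦ hxpos i hi.1 hi.2)
      (fun i hi j hj hij ↦ hxmono i j hi.1 hij hj.2)
      (fun k hk ↦ by rw [mem_Icc] at hk; exact hsum k hk.1 hk.2)
  intro i hi1 hin
  have hratio_one := Real.eq_one_of_prod_eq_one_of_sum_le_card hratio_pos hratio_prod hratio_sum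
    i (mem_Icc.mpr ⟨hi1, hin⟩)
  exact ((div_eq_one_iff_eq (hxpos i hi1 hin).ne').mp hratio_one).symm

theorem stmt5 (n : ℕ) (x y : ℕ → ℝ)
    (hxpos : ∀ i, 1 ≤ i → i ≤ n → 0 < x i)
    (hypos : ∀ i, 1 ≤ i → i ≤ n → 0 < y i)
    (hxmono : ∀ i j, 1 ≤ i → i ≤ j → j ≤ n → x j ≤ x i)
    (hymono : ∀ i j, 1 ≤ i → i ≤ j → j ≤ n → y j ≤ y i)
    (hsum : ∀ k, 1 ≤ k → k ≤ n →
      ∑ i ∈ Finset.Icc k n, y i ≤ ∑ i ∈ Finset.Icc k n, x i)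
    (hprod : ∏ i ∈ Finset.Icc 1 n, x i = ∏ i ∈ Finset.Icc 1 n, y i) :
    ∀ i, 1 ≤ i → i ≤ n → x i = y i :=
  stmt5_general n x y hxpos hypos hxmono hsum hprod
end

section
/- Let n_1, ..., n_k and q be positive integers such that n_i divides lcm(q, n_1, ..., n_{i-1}, n_{i+1}, ..., n_k) for every i, and q divides L := lcm(n_1, ..., n_k). Then L² ≤ q · ∏_{i=1}^k n_i. -/
/-! For each prime `p` let `v = v_p(lcm nᵢ)`. Some `nᵢ` has `v_p(nᵢ) = v`, and since `nᵢ` divides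
`lcm(q, n_j : j ≠ i)`, a second term, `q` or some `n_j` with `j ≠ i`, has valuation at least `v`.
Hence `2 v ≤ v_p(q) + ∑ v_p(nᵢ)`, which is `L² ∣ q ∏ nᵢ`. -/

namespace Finset

variable {ι : Type*} [DecidableEq ι] {s : Finset ι}

theorem two_mul_sup_le_add_sum (a : ι → ℕ) (b : ℕ)
    (ha : ∀ i ∈ s, a i ≤ max b ((s.erase i).sup a)) :
    2 * s.sup a ≤ b + ∑ i ∈ s, a i := by
  rcases s.eq_empty_or_nonempty with rfl | hs
  · simp
  obtain ⟨i, hi, hmax⟩ := exists_mem_eq_sup s hs a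
  have hrest : (s.erase i).sup a ≤ ∑ j ∈ s.erase i, a j :=
    Finset.sup_le fun _ hj => single_le_sum (fun _ _ => Nat.zero_le _) hj
  rw [hmax, ← add_sum_erase s a hi]
  rcases le_max_iff.1 (ha i hi) with hb | hb <;> omega

theorem sq_lcm_dvd_mul_prod {q : ℕ} {n : ι → ℕ} (hq : q ≠ 0) (hn : ∀ i ∈ s, n i ≠ 0)
    (hdvd : ∀ i ∈ s, n i ∣ Nat.lcm q ((s.erase i).lcm n)) :
    (s.lcm n) ^ 2 ∣ q * ∏ i ∈ s, n i := by
  have hP : ∏ i ∈ s, n i ≠ 0 := prod_ne_zero_iff.2 hn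
  rw [← Nat.factorization_le_iff_dvd (pow_ne_zero 2 (lcm_ne_zero_iff.2 hn)) (mul_ne_zero hq hP)]
  intro p
  simp only [Nat.factorization_pow, Nat.factorization_mul hq hP, Nat.factorization_prod hn,
    factorization_lcm hn, Finsupp.smul_apply, Finsupp.add_apply, Finsupp.coe_finsetSum,
    sum_apply, smul_eq_mul]
  refine two_mul_sup_le_add_sum _ _ fun i hi => ?_
  have hn' : ∀ j ∈ s.erase i, n j ≠ 0 := fun j hj => hn j (mem_of_mem_erase hj)
  have hM : (s.erase i).lcm n ≠ 0 := lcm_ne_zero_iff.2 hn'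
  have hi := (Nat.factorization_le_iff_dvd (hn i hi) (Nat.lcm_ne_zero hq hM)).2 (hdvd i hi) p
  rwa [Nat.factorization_lcm hq hM, Finsupp.sup_apply, factorization_lcm hn'] at hi

theorem sq_lcm_le_mul_prod {q : ℕ} {n : ι → ℕ}
    (hdvd : ∀ i ∈ s, n i ∣ Nat.lcm q ((s.erase i).lcm n)) (hqL : q ∣ s.lcm n) :
    (s.lcm n) ^ 2 ≤ q * ∏ i ∈ s, n i := by
  rcases eq_or_ne (s.lcm n) 0 with hL | hL
  · simp [hL]
  have hq : q ≠ 0 := ne_zero_of_dvd_ne_zero hL hqL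
  have hn : ∀ i ∈ s, n i ≠ 0 := lcm_ne_zero_iff.1 hL
  exact Nat.le_of_dvd (Nat.pos_of_ne_zero (mul_ne_zero hq (prod_ne_zero_iff.2 hn)))
    (sq_lcm_dvd_mul_prod hq hn hdvd)

end Finset

theorem stmt10_general (k q : ℕ) (n : ℕ → ℕ)
    (hdvd : ∀ i, 1 ≤ i → i ≤ k →
      n i ∣ Nat.lcm q (((Finset.Icc 1 k).erase i).lcm n))
    (hqL : q ∣ (Finset.Icc 1 k).lcm n) :
    ((Finset.Icc 1 k).lcm n) ^ 2 ≤ q * ∏ i ∈ Finset.Icc 1 k, n i :=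
  Finset.sq_lcm_le_mul_prod
    (fun i hi => hdvd i (Finset.mem_Icc.1 hi).1 (Finset.mem_Icc.1 hi).2) hqL

theorem stmt10 (k q : ℕ) (hq : 0 < q) (n : ℕ → ℕ)
    (hn : ∀ i, 1 ≤ i → i ≤ k → 0 < n i)
    (hdvd : ∀ i, 1 ≤ i → i ≤ k →
      n i ∣ Nat.lcm q (((Finset.Icc 1 k).erase i).lcm n))
    (hqL : q ∣ (Finset.Icc 1 k).lcm n) :
    ((Finset.Icc 1 k).lcm n) ^ 2 ≤ q * ∏ i ∈ Finset.Icc 1 k, n i :=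
  stmt10_general k q n hdvd hqL
end
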